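/- Let M₁, M₂ be real symmetric n×n matrices, A₁ a real n×n matrix, B₁ a real n×p matrix, u : ℝ → ℝᵖ continuous, μ₁ ∈ ℝ with A₁ᵀM₁ + M₁A₁ + μ₁M₁ negative semidefinite, T₁ ≥ 0, and r₁, r₂ ≥ 0. Let x*, x̃ : ℝ → ℝⁿ be differentiable with x*′(t) = A₁x*(t) + B₁u(t) and x̃′(t) = A₁x̃(t) + B₁u(t) for all t, and suppose x̃(0) ∈ B_{M₁}(x*(0), r₁). If the ellipsoid inclusion B_{M₁}(x*(T₁), r₁ e^{−μ₁T₁}) ⊆ B_{M₂}(x₂*, r₂) holds for some x₂* ∈ ℝⁿ, then x̃(T₁) ∈ B_{M₂}(x₂*, r₂). -/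

import Mathlib

/-! The error `e = x* − x̃` solves `e' = A₁ e`, and the matrix inequality says exactly that
`t ↦ eᵀM₁e · exp (μ₁ t)` has nonpositive derivative. Hence `eᵀM₁e` decays at rate `exp (−μ₁ t)`,
so `x̃(T₁)` lies in the contracted ball, which by assumption sits inside the next one. -/

open Matrix

section Calculus

variable {𝕜 : Type*} [NontriviallyNormedField 𝕜] {ι : Type*} [Fintype ι]

theorem HasDerivAt.dotProduct {f g : 𝕜 → ι → 𝕜} {f' g' : ι → 𝕜} {x : 𝕜}
    (hf : HasDerivAt f f' x) (hg : HasDerivAt g g' x) :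
    HasDerivAt (fun t => f t ⬝ᵥ g t) (f' ⬝ᵥ g x + f x ⬝ᵥ g') x := by
  simp only [_root_.dotProduct, ← Finset.sum_add_distrib]
  exact HasDerivAt.fun_sum fun i _ => (hasDerivAt_pi.1 hf i).mul (hasDerivAt_pi.1 hg i)

theorem HasDerivAt.mulVec {f : 𝕜 → ι → 𝕜} {f' : ι → 𝕜} {x : 𝕜}
    (M : Matrix ι ι 𝕜) (hf : HasDerivAt f f' x) :
    HasDerivAt (fun t => M *ᵥ f t) (M *ᵥ f') x :=
  hasDerivAt_pi.2 fun i =>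
    ((hasDerivAt_const x (M i)).dotProduct hf).congr_deriv (by rw [zero_dotProduct, zero_add]; rfl)

end Calculus

section Lyapunov

variable {ι : Type*} [Fintype ι] {M A : Matrix ι ι ℝ} {μ : ℝ} {e : ℝ → ι → ℝ}

theorem HasDerivAt.dotProduct_mulVec_of_linear {t : ℝ} (he : HasDerivAt e (A *ᵥ e t) t) :
    HasDerivAt (fun s => e s ⬝ᵥ (M *ᵥ e s)) (e t ⬝ᵥ ((Aᵀ * M + M * A) *ᵥ e t)) t := by
  refine (he.dotProduct (he.mulVec M)).congr_deriv ?_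
  rw [add_mulVec, dotProduct_add, ← mulVec_mulVec, ← mulVec_mulVec, dotProduct_mulVec (e t) Aᵀ,
    vecMul_transpose]

theorem antitone_dotProduct_mulVec_mul_exp (he : ∀ t, HasDerivAt e (A *ᵥ e t) t)
    (hneg : ∀ v, v ⬝ᵥ ((Aᵀ * M + M * A + μ • M) *ᵥ v) ≤ 0) :
    Antitone fun t => e t ⬝ᵥ (M *ᵥ e t) * Real.exp (μ * t) := by
  have hderiv : ∀ t, HasDerivAt (fun s => e s ⬝ᵥ (M *ᵥ e s) * Real.exp (μ * s))
      (e t ⬝ᵥ ((Aᵀ * M + M * A + μ • M) *ᵥ e t) * Real.exp (μ * t)) t := fun t => by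
    refine ((he t).dotProduct_mulVec_of_linear.mul
      ((hasDerivAt_id t).const_mul μ).exp).congr_deriv ?_
    simp only [add_mulVec, smul_mulVec, dotProduct_add, dotProduct_smul, smul_eq_mul, id]
    ring
  exact antitone_of_deriv_nonpos (fun t => (hderiv t).differentiableAt) fun t =>
    (hderiv t).deriv ▸ mul_nonpos_of_nonpos_of_nonneg (hneg _) (Real.exp_nonneg _)

theorem dotProduct_mulVec_le_mul_exp (he : ∀ t, HasDerivAt e (A *ᵥ e t) t)
    (hneg : ∀ v, v ⬝ᵥ ((Aᵀ * M + M * A + μ • M) *ᵥ v) ≤ 0) {T : ℝ} (hT : 0 ≤ T) :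
    e T ⬝ᵥ (M *ᵥ e T) ≤ e 0 ⬝ᵥ (M *ᵥ e 0) * Real.exp (-(μ * T)) := by
  have h := antitone_dotProduct_mulVec_mul_exp he hneg hT
  simp only [mul_zero, Real.exp_zero, mul_one] at h
  calc e T ⬝ᵥ (M *ᵥ e T)
      = e T ⬝ᵥ (M *ᵥ e T) * Real.exp (μ * T) * Real.exp (-(μ * T)) := by
        rw [mul_assoc, ← Real.exp_add, add_neg_cancel, Real.exp_zero, mul_one]
    _ ≤ _ := mul_le_mul_of_nonneg_right h (Real.exp_nonneg _)

end Lyapunov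

theorem stmt12_general {n p : ℕ} (M₁ M₂ : Matrix (Fin n) (Fin n) ℝ)
    (A₁ : Matrix (Fin n) (Fin n) ℝ) (B₁ : Matrix (Fin n) (Fin p) ℝ)
    (u : ℝ → Fin p → ℝ) (μ₁ : ℝ)
    (hnsd : ∀ v : Fin n → ℝ, v ⬝ᵥ ((A₁ᵀ * M₁ + M₁ * A₁ + μ₁ • M₁) *ᵥ v) ≤ 0)
    (T₁ r₁ r₂ : ℝ) (hT₁ : 0 ≤ T₁)
    (xs xp : ℝ → Fin n → ℝ)
    (hxs : ∀ t : ℝ, HasDerivAt xs (A₁ *ᵥ xs t + B₁ *ᵥ u t) t)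
    (hxp : ∀ t : ℝ, HasDerivAt xp (A₁ *ᵥ xp t + B₁ *ᵥ u t) t)
    (hinit : xp 0 ∈ {v : Fin n → ℝ | (xs 0 - v) ⬝ᵥ (M₁ *ᵥ (xs 0 - v)) ≤ r₁})
    (x₂ : Fin n → ℝ)
    (hincl : {v : Fin n → ℝ |
        (xs T₁ - v) ⬝ᵥ (M₁ *ᵥ (xs T₁ - v)) ≤ r₁ * Real.exp (-(μ₁ * T₁))} ⊆
      {v : Fin n → ℝ | (x₂ - v) ⬝ᵥ (M₂ *ᵥ (x₂ - v)) ≤ r₂}) :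
    xp T₁ ∈ {v : Fin n → ℝ | (x₂ - v) ⬝ᵥ (M₂ *ᵥ (x₂ - v)) ≤ r₂} := by
  have herr : ∀ t, HasDerivAt (xs - xp) (A₁ *ᵥ (xs - xp) t) t := fun t =>
    ((hxs t).sub (hxp t)).congr_deriv (by simp [mulVec_sub])
  exact hincl <| (dotProduct_mulVec_le_mul_exp herr hnsd hT₁).trans <|
    mul_le_mul_of_nonneg_right hinit (Real.exp_nonneg _)

/-- Mode-switching propagation step in the proof of the paper's Theorem 1: within one mode,
initial deviations in `B_{M₁}(x*(0), r₁)` contract to `B_{M₁}(x*(T₁), r₁e^{−μ₁T₁})` after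
dwell time `T₁`, and the assumed ellipsoid inclusion transfers the perturbed state into the
next mode's ball `B_{M₂}(x₂*, r₂)`. -/
theorem stmt12 {n p : ℕ} (M₁ M₂ : Matrix (Fin n) (Fin n) ℝ)
    (hM₁ : M₁.IsSymm) (hM₂ : M₂.IsSymm)
    (A₁ : Matrix (Fin n) (Fin n) ℝ) (B₁ : Matrix (Fin n) (Fin p) ℝ)
    (u : ℝ → Fin p → ℝ) (hu : Continuous u) (μ₁ : ℝ)
    (hnsd : ∀ v : Fin n → ℝ, v ⬝ᵥ ((A₁ᵀ * M₁ + M₁ * A₁ + μ₁ • M₁) *ᵥ v) ≤ 0)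
    (T₁ r₁ r₂ : ℝ) (hT₁ : 0 ≤ T₁) (hr₁ : 0 ≤ r₁) (hr₂ : 0 ≤ r₂)
    (xs xp : ℝ → Fin n → ℝ)
    (hxs : ∀ t : ℝ, HasDerivAt xs (A₁ *ᵥ xs t + B₁ *ᵥ u t) t)
    (hxp : ∀ t : ℝ, HasDerivAt xp (A₁ *ᵥ xp t + B₁ *ᵥ u t) t)
    (hinit : xp 0 ∈ {v : Fin n → ℝ | (xs 0 - v) ⬝ᵥ (M₁ *ᵥ (xs 0 - v)) ≤ r₁})
    (x₂ : Fin n → ℝ)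
    (hincl : {v : Fin n → ℝ |
        (xs T₁ - v) ⬝ᵥ (M₁ *ᵥ (xs T₁ - v)) ≤ r₁ * Real.exp (-(μ₁ * T₁))} ⊆
      {v : Fin n → ℝ | (x₂ - v) ⬝ᵥ (M₂ *ᵥ (x₂ - v)) ≤ r₂}) :
    xp T₁ ∈ {v : Fin n → ℝ | (x₂ - v) ⬝ᵥ (M₂ *ᵥ (x₂ - v)) ≤ r₂} :=
  stmt12_general M₁ M₂ A₁ B₁ u μ₁ hnsd T₁ r₁ r₂ hT₁ xs xp hxs hxp hinit x₂ hincl
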